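/- arXiv:1908.00839 — 4 statements merged into one kernel-verified Lean document; each statement's English description precedes it below -/
import Mathlib

section
/- For a nonconstant real function H that is analytic in a neighborhood of 0, the following two conditions are equivalent: (1) H(0) > 0, H'(0) = 0, and there exists δ > 0 such that H''(x) ≤ 0 for all x with 0 < x < δ; (2) there exist real numbers α > 0, λ > 0 and an integer k ≥ 2 such that H(x) = α(1 − λx^k) + O(x^{k+1}) as x → 0. -/
/-!
Since `H` is analytic and not locally constant, `H x = H 0 + x ^ n * g x` near `0` with `n ≥ 1`
and `g` analytic, `g 0 ≠ 0`. Both conditions turn out to say exactly that `H 0 > 0`, `n ≥ 2` and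
`g 0 < 0`. For (1), differentiating twice gives `H'' x = x ^ (n - 2) * w x` with
`w 0 = n (n - 1) g 0`, so the sign of `H''` just right of `0` is the sign of `g 0`. For (2), the
expansion is `α = H 0`, `k = n`, `λ = -g 0 / H 0`, and conversely this is forced by uniqueness of
the leading term of `x ^ n * g x + α λ x ^ k = O(x ^ (k + 1))`.
-/

open Filter Topology Asymptotics

theorem AnalyticAt.exists_eventuallyEq_add_pow_mul {H : ℝ → ℝ} (hH : AnalyticAt ℝ H 0)
    (hnc : ¬ ∃ c : ℝ, ∀ᶠ x in 𝓝 (0 : ℝ), H x = c) :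
    ∃ (n : ℕ) (g : ℝ → ℝ), 1 ≤ n ∧ AnalyticAt ℝ g 0 ∧ g 0 ≠ 0 ∧
      H =ᶠ[𝓝 0] fun x => H 0 + x ^ n * g x := by
  have hne : ¬ ∀ᶠ x in 𝓝 (0 : ℝ), H x - H 0 = 0 := fun h =>
    hnc ⟨H 0, h.mono fun x hx => sub_eq_zero.mp hx⟩
  obtain ⟨n, g, hg, hg0, hfac⟩ :=
    (hH.sub analyticAt_const).exists_eventuallyEq_pow_smul_nonzero_iff.mpr hne
  have hfac' : H =ᶠ[𝓝 0] fun x => H 0 + x ^ n * g x := by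
    filter_upwards [hfac] with x hx
    simp only [Pi.sub_apply, sub_zero, smul_eq_mul] at hx
    linarith
  refine ⟨n, g, Nat.one_le_iff_ne_zero.mpr fun hn => hg0 ?_, hg, hg0, hfac'⟩
  simpa [hn] using hfac'.self_of_nhds

theorem exists_deriv_eventuallyEq_pow_mul {H u : ℝ → ℝ} {c : ℝ} {m : ℕ}
    (hu : AnalyticAt ℝ u 0) (hH : H =ᶠ[𝓝 0] fun x => c + x ^ (m + 1) * u x) :
    ∃ v : ℝ → ℝ, AnalyticAt ℝ v 0 ∧ v 0 = (m + 1) * u 0 ∧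
      deriv H =ᶠ[𝓝 0] fun x => x ^ m * v x := by
  refine ⟨fun x => (m + 1) * u x + x * deriv u x, by fun_prop, by simp, ?_⟩
  filter_upwards [hH.deriv, hu.eventually_analyticAt] with x hx hux
  have hd : HasDerivAt (fun y => c + y ^ (m + 1) * u y)
      ((↑(m + 1) * x ^ m) * u x + x ^ (m + 1) * deriv u x) x :=
    ((hasDerivAt_pow (m + 1) x).mul hux.differentiableAt.hasDerivAt).const_add c
  rw [hx, hd.deriv]
  push_cast
  ring

theorem exists_deriv_deriv_eventuallyEq_pow_mul {H u : ℝ → ℝ} {c : ℝ} {m : ℕ}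
    (hu : AnalyticAt ℝ u 0) (hH : H =ᶠ[𝓝 0] fun x => c + x ^ (m + 2) * u x) :
    ∃ w : ℝ → ℝ, AnalyticAt ℝ w 0 ∧ w 0 = (m + 2) * (m + 1) * u 0 ∧
      deriv (deriv H) =ᶠ[𝓝 0] fun x => x ^ m * w x := by
  obtain ⟨v, hv, hv0, hH'⟩ := exists_deriv_eventuallyEq_pow_mul (m := m + 1) hu hH
  obtain ⟨w, hw, hw0, hH''⟩ :=
    exists_deriv_eventuallyEq_pow_mul (c := 0) (m := m) hv (hH'.trans (by simp [EventuallyEq]))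
  refine ⟨w, hw, ?_, hH''⟩
  rw [hw0, hv0]
  push_cast
  ring

theorem apply_zero_eq_zero_of_isBigO_pow {f g : ℝ → ℝ} {n m : ℕ} (hg : ContinuousAt g 0)
    (hfg : f =ᶠ[𝓝 0] fun x => x ^ n * g x) (hf : f =O[𝓝[≠] 0] fun x => x ^ m) (hnm : n < m) :
    g 0 = 0 := by
  have hg_eq : (fun x => (x ^ n)⁻¹ * f x) =ᶠ[𝓝[≠] 0] g := by
    filter_upwards [hfg.filter_mono nhdsWithin_le_nhds, self_mem_nhdsWithin] with x hx hx0
    rw [hx, inv_mul_cancel_left₀ (pow_ne_zero n hx0)]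
  have hpow_eq : (fun x : ℝ => (x ^ n)⁻¹ * x ^ m) =ᶠ[𝓝[≠] 0] fun x => x ^ (m - n) := by
    filter_upwards [self_mem_nhdsWithin] with x hx0
    rw [← div_eq_inv_mul, pow_sub₀ x hx0 hnm.le, div_eq_mul_inv, mul_comm]
  have hg_isBigO : g =O[𝓝[≠] 0] fun x => x ^ (m - n) :=
    ((isBigO_refl _ _).mul hf).congr' hg_eq hpow_eq
  have hpow : Tendsto (fun x : ℝ => x ^ (m - n)) (𝓝[≠] 0) (𝓝 0) := by
    simpa [zero_pow (Nat.sub_ne_zero_of_lt hnm)] using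
      ((continuous_pow (m - n)).tendsto (0 : ℝ)).mono_left nhdsWithin_le_nhds
  exact tendsto_nhds_unique (hg.tendsto.mono_left nhdsWithin_le_nhds)
    (hg_isBigO.trans_tendsto hpow)

theorem eventually_nhdsGT_zero_iff {P : ℝ → Prop} :
    (∀ᶠ x in 𝓝[>] 0, P x) ↔ ∃ δ > 0, ∀ x : ℝ, 0 < x → x < δ → P x := by
  simp [(nhdsGT_basis (0 : ℝ)).eventually_iff, Set.mem_Ioo, and_imp]

section Factorization

variable {H g : ℝ → ℝ} {n : ℕ}

theorem deriv_eq_zero_iff_two_le (hg : AnalyticAt ℝ g 0) (hg0 : g 0 ≠ 0)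
    (hH : H =ᶠ[𝓝 0] fun x => H 0 + x ^ n * g x) (hn : 1 ≤ n) :
    deriv H 0 = 0 ↔ 2 ≤ n := by
  obtain ⟨m, rfl⟩ := Nat.exists_eq_add_of_le' hn
  obtain ⟨v, -, hv0, hH'⟩ := exists_deriv_eventuallyEq_pow_mul hg hH
  have hv0' : v 0 ≠ 0 := by rw [hv0]; exact mul_ne_zero (by positivity) hg0
  rw [hH'.self_of_nhds]
  simp [hv0', Nat.one_le_iff_ne_zero]

theorem eventually_deriv_deriv_nonpos_iff (hg : AnalyticAt ℝ g 0) (hg0 : g 0 ≠ 0)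
    (hH : H =ᶠ[𝓝 0] fun x => H 0 + x ^ n * g x) (hn : 2 ≤ n) :
    (∀ᶠ x in 𝓝[>] 0, deriv (deriv H) x ≤ 0) ↔ g 0 < 0 := by
  obtain ⟨m, rfl⟩ := Nat.exists_eq_add_of_le' hn
  obtain ⟨w, hw, hw0, hH''⟩ := exists_deriv_deriv_eventuallyEq_pow_mul hg hH
  have hpos : (0 : ℝ) < (m + 2) * (m + 1) := by positivity
  have hH''_right := hH''.filter_mono (nhdsWithin_le_nhds (s := Set.Ioi 0))
  constructor
  · intro hneg
    have hw_nonpos : ∀ᶠ x in 𝓝[>] 0, w x ≤ 0 := by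
      filter_upwards [hneg, hH''_right, self_mem_nhdsWithin] with x hx hx' (hx0 : 0 < x)
      rw [hx'] at hx
      exact nonpos_of_mul_nonpos_right hx (pow_pos hx0 m)
    have hw0_nonpos : w 0 ≤ 0 :=
      le_of_tendsto (hw.continuousAt.tendsto.mono_left nhdsWithin_le_nhds) hw_nonpos
    rw [hw0] at hw0_nonpos
    exact lt_of_le_of_ne (nonpos_of_mul_nonpos_right hw0_nonpos hpos) hg0
  · intro hneg
    have hw0_neg : w 0 < 0 := by rw [hw0]; exact mul_neg_of_pos_of_neg hpos hneg
    have hw_neg : ∀ᶠ x in 𝓝 0, w x < 0 := hw.continuousAt.eventually_lt continuousAt_const hw0_neg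
    filter_upwards [hH''_right, hw_neg.filter_mono nhdsWithin_le_nhds, self_mem_nhdsWithin]
      with x hx hwx (hx0 : 0 < x)
    rw [hx]
    exact mul_nonpos_of_nonneg_of_nonpos (pow_nonneg hx0.le m) hwx.le

theorem eq_of_isBigO_sub_const_mul_one_sub_pow (hg : ContinuousAt g 0) (hg0 : g 0 ≠ 0)
    (hH : H =ᶠ[𝓝 0] fun x => H 0 + x ^ n * g x)
    {α lam : ℝ} {k : ℕ} (hk : 0 < k) (hαlam : α * lam ≠ 0)
    (hO : (fun x => H x - α * (1 - lam * x ^ k)) =O[𝓝[≠] 0] fun x => x ^ (k + 1)) :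
    H 0 = α ∧ n = k ∧ g 0 = -(α * lam) := by
  set E := fun x => H x - α * (1 - lam * x ^ k) with hE_def
  have hHc : ContinuousAt H 0 := ContinuousAt.congr (by fun_prop) hH.symm
  have hE0 : E 0 = 0 :=
    apply_zero_eq_zero_of_isBigO_pow (n := 0) (by fun_prop) (by simp) hO (Nat.succ_pos k)
  have hHα : H 0 = α := by simpa [hE_def, zero_pow hk.ne', sub_eq_zero] using hE0
  have hE : E =ᶠ[𝓝 0] fun x => x ^ n * g x + α * lam * x ^ k := by
    filter_upwards [hH] with x hx
    simp only [hE_def, hx, hHα]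
    ring
  rcases lt_trichotomy n k with hnk | rfl | hkn
  · refine absurd (apply_zero_eq_zero_of_isBigO_pow (n := n)
      (g := fun x => g x + α * lam * x ^ (k - n)) (by fun_prop) ?_ hO
      (hnk.trans (Nat.lt_succ_self k))) ?_
    · filter_upwards [hE] with x hx
      rw [hx, ← Nat.add_sub_of_le hnk.le, pow_add, Nat.add_sub_cancel_left]
      ring
    · simpa [zero_pow (Nat.sub_ne_zero_of_lt hnk)] using hg0
  · refine ⟨hHα, rfl, eq_neg_of_add_eq_zero_left ?_⟩
    refine apply_zero_eq_zero_of_isBigO_pow (g := fun x => g x + α * lam) (by fun_prop) ?_ hO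
      (Nat.lt_succ_self n)
    filter_upwards [hE] with x hx
    rw [hx]
    ring
  · refine absurd (apply_zero_eq_zero_of_isBigO_pow (n := k)
      (g := fun x => x ^ (n - k) * g x + α * lam) (by fun_prop) ?_ hO
      (Nat.lt_succ_self k)) ?_
    · filter_upwards [hE] with x hx
      rw [hx, ← Nat.add_sub_of_le hkn.le, pow_add, Nat.add_sub_cancel_left]
      ring
    · simpa [zero_pow (Nat.sub_ne_zero_of_lt hkn)] using hαlam

theorem isBigO_sub_const_mul_one_sub_pow (hg : DifferentiableAt ℝ g 0)
    (hH : H =ᶠ[𝓝 0] fun x => H 0 + x ^ n * g x) (hH0 : H 0 ≠ 0) :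
    (fun x => H x - H 0 * (1 - (-g 0 / H 0) * x ^ n)) =O[𝓝 0] fun x => x ^ (n + 1) := by
  have hE : (fun x => H x - H 0 * (1 - (-g 0 / H 0) * x ^ n)) =ᶠ[𝓝 0]
      fun x => x ^ n * (g x - g 0) := by
    filter_upwards [hH] with x hx
    rw [hx]
    field_simp
    ring
  have hg_sub : (fun x => g x - g 0) =O[𝓝 0] fun x => x := by
    simpa using hg.isBigO_sub
  simpa only [← pow_succ] using hE.trans_isBigO ((isBigO_refl (fun x => x ^ n) _).mul hg_sub)

end Factorization

/-- **Proposition 3 (C-functions).** For a nonconstant real function `H`, analytic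
at `0`, the following are equivalent:
(1) `H 0 > 0`, `H' 0 = 0`, and `H'' x ≤ 0` for positive `x` close to `0`;
(2) there are reals `α, λ > 0` and an integer `k ≥ 2` such that
`H x = α * (1 - λ * x ^ k) + O (x ^ (k + 1))` as `x → 0`. -/
theorem stmt_1 (H : ℝ → ℝ) (hH : AnalyticAt ℝ H 0)
    (hnc : ¬ ∃ c : ℝ, ∀ᶠ x in 𝓝 (0 : ℝ), H x = c) :
    (0 < H 0 ∧ deriv H 0 = 0 ∧
        ∃ δ > 0, ∀ x : ℝ, 0 < x → x < δ → deriv (deriv H) x ≤ 0) ↔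
      (∃ (α lam : ℝ) (k : ℕ), 0 < α ∧ 0 < lam ∧ 2 ≤ k ∧
        (fun x : ℝ => H x - α * (1 - lam * x ^ k)) =O[𝓝[≠] (0 : ℝ)]
          fun x : ℝ => x ^ (k + 1)) := by
  obtain ⟨n, g, hn, hg, hg0, hfac⟩ := hH.exists_eventuallyEq_add_pow_mul hnc
  rw [← eventually_nhdsGT_zero_iff, deriv_eq_zero_iff_two_le hg hg0 hfac hn]
  trans 0 < H 0 ∧ 2 ≤ n ∧ g 0 < 0
  · exact and_congr_right fun _ => and_congr_right
      (eventually_deriv_deriv_nonpos_iff hg hg0 hfac)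
  constructor
  · rintro ⟨hpos, h2, hneg⟩
    exact ⟨H 0, -g 0 / H 0, n, hpos, div_pos (neg_pos.2 hneg) hpos, h2,
      (isBigO_sub_const_mul_one_sub_pow hg.differentiableAt hfac hpos.ne').mono nhdsWithin_le_nhds⟩
  · rintro ⟨α, lam, k, hα, hlam, hk, hO⟩
    obtain ⟨hHα, rfl, hg0'⟩ :=
      eq_of_isBigO_sub_const_mul_one_sub_pow hg.continuousAt hg0 hfac (by omega)
        (mul_pos hα hlam).ne' hO
    exact ⟨hHα ▸ hα, hk, hg0' ▸ neg_neg_of_pos (mul_pos hα hlam)⟩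
end

section
/- Let a, b, c be positive reals, ε > 0, and for n ∈ ℕ let m(n) = ⌊nε/c − max(a,b)/c⌋ and K_n = ∏_{j=0}^{m(n)} (cj+a)/(cj+b). Then K_n ∼ (Γ(b/c)/Γ(a/c)) · (ε/c)^{(a−b)/c} · n^{(a−b)/c} as n → ∞, i.e., K_n / n^{(a−b)/c} → (Γ(b/c)/Γ(a/c)) · (ε/c)^{(a−b)/c}. -/
open Filter Topology Finset

lemma aux_prod (α β : ℝ) (hα : 0 < α) (hβ : 0 < β) (N : ℕ) (hN : 1 ≤ N) :
    ∏ j ∈ Finset.range (N + 1), (α + j) / (β + j) =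
      (N : ℝ) ^ (α - β) * (Real.GammaSeq β N / Real.GammaSeq α N) := by
  have hNpos : (0 : ℝ) < N := by exact_mod_cast hN
  have hPα : 0 < ∏ j ∈ Finset.range (N + 1), (α + (j : ℝ)) :=
    Finset.prod_pos fun j _ => by positivity
  have hPβ : 0 < ∏ j ∈ Finset.range (N + 1), (β + (j : ℝ)) :=
    Finset.prod_pos fun j _ => by positivity
  have hfac : (0 : ℝ) < (Nat.factorial N : ℝ) := by exact_mod_cast N.factorial_pos
  have ht : (0 : ℝ) < (N : ℝ) ^ β := Real.rpow_pos_of_pos hNpos β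
  have hs : (0 : ℝ) < (N : ℝ) ^ (α - β) := Real.rpow_pos_of_pos hNpos (α - β)
  have hNα : (N : ℝ) ^ α = (N : ℝ) ^ (α - β) * (N : ℝ) ^ β := by
    rw [← Real.rpow_add hNpos]; ring_nf
  rw [Finset.prod_div_distrib, Real.GammaSeq, Real.GammaSeq, hNα]
  field_simp

/-- **Proposition 2.** For positive reals `a, b, c` and `ε > 0`, with
`m n = ⌊n*ε/c - max a b / c⌋` and `K n = ∏_{j=0}^{m n} (c*j+a)/(c*j+b)`,
one has `K n ∼ (Γ(b/c)/Γ(a/c)) * (ε/c) ^ ((a-b)/c) * n ^ ((a-b)/c)`. -/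
theorem stmt_4 (a b c ε : ℝ) (ha : 0 < a) (hb : 0 < b) (hc : 0 < c) (hε : 0 < ε)
    (m : ℕ → ℕ) (hm : ∀ n : ℕ, m n = (⌊(n : ℝ) * ε / c - max a b / c⌋).toNat)
    (K : ℕ → ℝ)
    (hK : ∀ n : ℕ, K n = ∏ j ∈ Finset.range (m n + 1), (c * j + a) / (c * j + b)) :
    Tendsto (fun n : ℕ => K n / (n : ℝ) ^ ((a - b) / c)) atTop
      (𝓝 (Real.Gamma (b / c) / Real.Gamma (a / c) * (ε / c) ^ ((a - b) / c))) := by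
  have hα : 0 < a / c := div_pos ha hc
  have hβ : 0 < b / c := div_pos hb hc
  have hγ : (a - b) / c = a / c - b / c := sub_div a b c
  set x : ℕ → ℝ := fun n => (n : ℝ) * ε / c - max a b / c with hx
  have hm' : ∀ n : ℕ, m n = (⌊x n⌋).toNat := fun n => hm n
  have hx_top : Tendsto x atTop atTop := by
    apply Tendsto.atTop_add _ tendsto_const_nhds
    exact (tendsto_natCast_atTop_atTop.atTop_mul_const (div_pos hε hc)).congr
      (fun n => by ring)
  have hev1 : ∀ᶠ n : ℕ in atTop, 1 ≤ x n := hx_top.eventually_ge_atTop 1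
  have hmx : ∀ n : ℕ, 1 ≤ x n → ((m n : ℝ) = (⌊x n⌋ : ℝ) ∧ 1 ≤ m n) := by
    intro n hn
    have h0 : (1:ℤ) ≤ ⌊x n⌋ := Int.le_floor.2 (by exact_mod_cast hn)
    refine ⟨?_, ?_⟩
    · rw [hm' n]; exact_mod_cast Int.toNat_of_nonneg (by omega : (0:ℤ) ≤ ⌊x n⌋)
    · rw [hm' n]; omega
  -- m tends to atTop
  have hm_top : Tendsto m atTop atTop := by
    rw [← tendsto_natCast_atTop_iff (R := ℝ)]
    apply tendsto_atTop_mono' _ _ (hx_top.atTop_add (tendsto_const_nhds (x := (-1:ℝ))))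
    filter_upwards [hev1] with n hn
    have := (hmx n hn).1
    have h2 := Int.sub_one_lt_floor (x n)
    rw [this]; linarith
  -- m n / n tends to ε / c
  have hmn : Tendsto (fun n : ℕ => (m n : ℝ) / n) atTop (𝓝 (ε / c)) := by
    have hlo : Tendsto (fun n : ℕ => ε / c - (max a b / c + 1) / n) atTop (𝓝 (ε / c)) := by
      have := (tendsto_const_nhds (x := ε / c) (f := atTop (α := ℕ))).sub
        (Tendsto.div_atTop (tendsto_const_nhds (x := max a b / c + 1))
          (tendsto_natCast_atTop_atTop (R := ℝ)))
      simpa using this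
    have hhi : Tendsto (fun n : ℕ => ε / c - (max a b / c) / n) atTop (𝓝 (ε / c)) := by
      have := (tendsto_const_nhds (x := ε / c) (f := atTop (α := ℕ))).sub
        (Tendsto.div_atTop (tendsto_const_nhds (x := max a b / c))
          (tendsto_natCast_atTop_atTop (R := ℝ)))
      simpa using this
    refine tendsto_of_tendsto_of_tendsto_of_le_of_le' hlo hhi ?_ ?_
    · filter_upwards [hev1, eventually_ge_atTop 1] with n hn hn1
      have hnpos : (0:ℝ) < n := by exact_mod_cast hn1
      have h2 : x n - 1 ≤ (m n : ℝ) := by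
        rw [(hmx n hn).1]; linarith [Int.sub_one_lt_floor (x n)]
      calc ε / c - (max a b / c + 1) / n = (x n - 1) / n := by
            simp only [hx]; field_simp; ring
        _ ≤ (m n : ℝ) / n := by gcongr
    · filter_upwards [hev1, eventually_ge_atTop 1] with n hn hn1
      have hnpos : (0:ℝ) < n := by exact_mod_cast hn1
      have h2 : (m n : ℝ) ≤ x n := by
        rw [(hmx n hn).1]; exact Int.floor_le (x n)
      calc (m n : ℝ) / n ≤ x n / n := by gcongr
        _ = ε / c - (max a b / c) / n := by simp only [hx]; field_simp
  -- main limit pieces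
  have hΓα : Real.Gamma (a / c) ≠ 0 := (Real.Gamma_pos_of_pos hα).ne'
  have hG : Tendsto (fun n : ℕ => Real.GammaSeq (b / c) (m n) / Real.GammaSeq (a / c) (m n))
      atTop (𝓝 (Real.Gamma (b / c) / Real.Gamma (a / c))) :=
    (((Real.GammaSeq_tendsto_Gamma (b / c)).comp hm_top).div
      ((Real.GammaSeq_tendsto_Gamma (a / c)).comp hm_top) hΓα)
  have hpow : Tendsto (fun n : ℕ => ((m n : ℝ) / n) ^ ((a - b) / c)) atTop
      (𝓝 ((ε / c) ^ ((a - b) / c))) :=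
    hmn.rpow_const (Or.inl (div_pos hε hc).ne')
  have hmain := hpow.mul hG
  rw [mul_comm] at hmain
  refine hmain.congr' ?_
  filter_upwards [hev1, eventually_ge_atTop 1] with n hn hn1
  have hnpos : (0:ℝ) < n := by exact_mod_cast hn1
  have hm1 : 1 ≤ m n := (hmx n hn).2
  have hmpos : (0:ℝ) < (m n : ℝ) := by exact_mod_cast hm1
  have hKeq : K n = ((m n : ℝ)) ^ (a / c - b / c) *
      (Real.GammaSeq (b / c) (m n) / Real.GammaSeq (a / c) (m n)) := by
    rw [hK n, ← aux_prod (a / c) (b / c) hα hβ (m n) hm1]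
    refine Finset.prod_congr rfl fun j _ => ?_
    rw [div_eq_div_iff (by positivity) (by positivity)]
    field_simp
    ring
  rw [hKeq, hγ, Real.div_rpow hmpos.le (Nat.cast_nonneg n)]
  field_simp
end

section
/- For each integer n ≥ 4, let θ = π/(2n) and let M(n) be the largest natural number j such that (4j+5)θ < π/2; define D_n = ∏_{j=0}^{M(n)} sin((4j+5)θ) / sin((4j+3)θ). Then there exists a constant C > 0 such that D_n ∼ C·√n as n → ∞; in particular, D_n → ∞ as n → ∞. -/
/-!
With `θ = π / (2n)`, write `s k = sin (k θ)`. Since `s (4j+5) s (4j+1) = s (4j+3)² - s 2²`, each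
squared factor `(s (4j+5) / s (4j+3))²` is `s (4j+5) / s (4j+1)` times `1 - (s 2 / s (4j+3))²`.
Over the `m` factors the first parts telescope to `s (4m+1) / s 1 ∼ 2n / π`. By Jordan's
inequality the `j`-th defect `(s 2 / s (4j+3))²` is at most `(π / (4j+3))²` uniformly in `n`, so
by dominated convergence the second product tends to `∏ (1 - (2 / (4j+3))²) > 0`. Hence
`D n² / n` has a positive limit.
-/

open Filter Topology Finset Real

theorem sin_add_mul_sin_sub (x y : ℝ) : sin (x + y) * sin (x - y) = sin x ^ 2 - sin y ^ 2 := by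
  rw [sin_add, sin_sub]
  nlinarith [sin_sq_add_cos_sq x, sin_sq_add_cos_sq y]

theorem sq_prod_sin_div_sin (θ : ℝ) (m : ℕ) (h₀ : sin θ ≠ 0)
    (h : ∀ j < m, sin ((4 * j + 3) * θ) ≠ 0) :
    (∏ j ∈ range m, sin ((4 * j + 5) * θ) / sin ((4 * j + 3) * θ)) ^ 2 =
      sin ((4 * m + 1) * θ) / sin θ *
        ∏ j ∈ range m, (1 - (sin (2 * θ) / sin ((4 * j + 3) * θ)) ^ 2) := by
  induction m with
  | zero => simp [h₀]
  | succ m ih =>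
    have key : sin ((4 * m + 5) * θ) * sin ((4 * m + 1) * θ) =
        sin ((4 * m + 3) * θ) ^ 2 - sin (2 * θ) ^ 2 := by
      rw [← sin_add_mul_sin_sub]; ring_nf
    rw [prod_range_succ, prod_range_succ, mul_pow, ih fun j hj => h j (hj.trans m.lt_succ_self),
      div_pow (sin (2 * θ)), one_sub_div (pow_ne_zero 2 (h m m.lt_succ_self)), ← key]
    push_cast
    ring_nf

theorem tendsto_sin_mul_div_sin_mul (a : ℝ) {b : ℝ} (hb : b ≠ 0) :
    Tendsto (fun t => sin (a * t) / sin (b * t)) (𝓝[≠] 0) (𝓝 (a / b)) := by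
  have hsinc : Tendsto (fun t => a / b * (sinc (a * t) / sinc (b * t))) (𝓝 0)
      (𝓝 (a / b * (sinc (a * 0) / sinc (b * 0)))) :=
    ((continuous_sinc.comp (continuous_const_mul a)).tendsto 0).div
      ((continuous_sinc.comp (continuous_const_mul b)).tendsto 0) (by simp) |>.const_mul _
  simp only [mul_zero, sinc_zero, div_one, mul_one] at hsinc
  refine (hsinc.mono_left nhdsWithin_le_nhds).congr' ?_
  filter_upwards [self_mem_nhdsWithin] with t ht
  rcases eq_or_ne a 0 with rfl | ha
  · simp
  rw [sinc_of_ne_zero (mul_ne_zero ha ht), sinc_of_ne_zero (mul_ne_zero hb ht)]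
  field_simp
  exact mul_div_mul_left _ _ ht

theorem sin_div_sin_le_mul_div {x y : ℝ} (hx : 0 ≤ x) (hy : 0 < y) (hy' : y ≤ π / 2) :
    sin x / sin y ≤ π / 2 * (x / y) := by
  have hsy : 2 / π * y ≤ sin y := mul_le_sin hy.le hy'
  rw [div_le_iff₀ (lt_of_lt_of_le (by positivity) hsy)]
  calc sin x ≤ π / 2 * (x / y) * (2 / π * y) := by field_simp; exact sin_le hx
    _ ≤ π / 2 * (x / y) * sin y := by gcongr

theorem summable_div_four_mul_add_three_sq (c : ℝ) :
    Summable fun j : ℕ => (c / (4 * j + 3)) ^ 2 := by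
  have h := ((summable_nat_add_iff 1).2 (summable_one_div_nat_pow.2 one_lt_two)).mul_left (c ^ 2)
  refine h.of_nonneg_of_le (fun j => sq_nonneg _) fun j => ?_
  rw [div_pow, mul_one_div]
  push_cast
  gcongr <;> linarith

theorem tprod_one_sub_pos {ι : Type*} {f : ι → ℝ} (hf : Summable f) (h : ∀ i, f i < 1) :
    0 < ∏' i, (1 - f i) := by
  rw [← rexp_tsum_eq_tprod (fun i => sub_pos.2 (h i))]
  · exact exp_pos _
  · simpa [sub_eq_add_neg] using summable_log_one_add_of_summable hf.neg

noncomputable def angle (n : ℕ) : ℝ := π / (2 * n)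

-- `j < numFactors n ↔ 4 * j + 5 < n`: the number of factors of `D n`.
def numFactors (n : ℕ) : ℕ := (n - 2) / 4

theorem natCast_mul_angle {n : ℕ} (hn : n ≠ 0) : n * angle n = π / 2 := by
  rw [angle]; field_simp

theorem angle_pos {n : ℕ} (hn : n ≠ 0) : 0 < angle n := by
  rw [angle]; positivity

theorem sin_mul_angle_pos {n : ℕ} {k : ℝ} (hk₀ : 0 < k) (hk : k < 2 * n) :
    0 < sin (k * angle n) := by
  have hn : (n : ℝ) ≠ 0 := by intro h; rw [h] at hk; linarith
  refine sin_pos_of_pos_of_lt_pi (mul_pos hk₀ (by rw [angle]; positivity)) ?_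
  rw [angle, mul_div_assoc', div_lt_iff₀ (by positivity)]
  nlinarith [pi_pos]

theorem tendsto_angle : Tendsto angle atTop (𝓝[>] 0) := by
  refine tendsto_nhdsWithin_iff.2 ⟨?_, eventually_ne_atTop 0 |>.mono fun n hn => angle_pos hn⟩
  have := ((tendsto_natCast_atTop_atTop (R := ℝ)).const_mul_atTop two_pos).inv_tendsto_atTop
    |>.const_mul π
  rw [mul_zero] at this
  exact this.congr fun n => (div_eq_mul_inv _ _).symm

theorem filter_range_eq_range_numFactors {n : ℕ} (hn : n ≠ 0) :
    (range n).filter (fun j : ℕ => ((4 * j + 5) : ℝ) * (π / (2 * n)) < π / 2) =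
      range (numFactors n) := by
  ext j
  rw [mem_filter, mem_range, mem_range, ← angle, ← natCast_mul_angle hn,
    mul_lt_mul_iff_left₀ (angle_pos hn), numFactors]
  norm_cast
  omega

theorem four_mul_add_six_le_of_lt_numFactors {n j : ℕ} (hj : j < numFactors n) :
    (4 * j + 6 : ℝ) ≤ n := by
  rw [numFactors] at hj
  exact_mod_cast (by omega : 4 * j + 6 ≤ n)

theorem tendsto_sin_div_natCast_mul_sin :
    Tendsto (fun n => sin ((4 * numFactors n + 1) * angle n) / (n * sin (angle n)))
      atTop (𝓝 (2 / π)) := by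
  have hθ : Tendsto angle atTop (𝓝 0) := tendsto_angle.mono_right nhdsWithin_le_nhds
  have harg : Tendsto (fun n => (4 * numFactors n + 1 : ℝ) * angle n) atTop (𝓝 (π / 2)) := by
    refine tendsto_of_tendsto_of_tendsto_of_le_of_le' (g := fun n => π / 2 - 4 * angle n)
      (by simpa using (hθ.const_mul 4).const_sub (π / 2)) tendsto_const_nhds ?_ ?_ <;>
    filter_upwards [eventually_ge_atTop 2] with n hn <;>
    · have hm : (n : ℝ) ≤ 4 * numFactors n + 5 ∧ (4 * numFactors n + 1 : ℝ) ≤ n := by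
        norm_cast; rw [numFactors]; omega
      nlinarith [natCast_mul_angle (n := n) (by omega), angle_pos (n := n) (by omega)]
  have hden : Tendsto (fun n : ℕ => (n : ℝ) * sin (angle n)) atTop (𝓝 (π / 2)) := by
    have := ((continuous_sinc.tendsto 0).comp hθ).const_mul (π / 2)
    rw [sinc_zero, mul_one] at this
    refine this.congr' ?_
    filter_upwards [eventually_ne_atTop 0] with n hn
    rw [Function.comp_apply, sinc_of_ne_zero (angle_pos hn).ne', ← natCast_mul_angle hn]
    field_simp [(angle_pos hn).ne']
  have := ((continuous_sin.tendsto _).comp harg).div hden (div_pos pi_pos two_pos).ne'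
  rwa [sin_pi_div_two, one_div_div] at this

theorem tendsto_prod_one_sub_sin_div_sin_sq :
    Tendsto (fun n => ∏ j ∈ range (numFactors n),
        (1 - (sin (2 * angle n) / sin ((4 * j + 3) * angle n)) ^ 2))
      atTop (𝓝 (∏' j : ℕ, (1 - (2 / (4 * j + 3) : ℝ) ^ 2))) := by
  set f : ℕ → ℕ → ℝ := fun n j =>
    if j < numFactors n then -(sin (2 * angle n) / sin ((4 * j + 3) * angle n)) ^ 2 else 0
  have htprod : ∀ n, ∏' j, (1 + f n j) = ∏ j ∈ range (numFactors n),
      (1 - (sin (2 * angle n) / sin ((4 * j + 3) * angle n)) ^ 2) := by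
    intro n
    rw [tprod_eq_prod (s := range (numFactors n)) fun j hj => by simp_all [f]]
    exact prod_congr rfl fun j hj => by simp [f, mem_range.1 hj, sub_eq_add_neg]
  have hlim (j : ℕ) : Tendsto (f · j) atTop (𝓝 (-(2 / (4 * j + 3)) ^ 2)) := by
    refine (((tendsto_sin_mul_div_sin_mul 2 (by positivity)).comp
      (tendsto_angle.mono_right (nhdsGT_le_nhdsNE 0))).pow 2).neg.congr' ?_
    filter_upwards [eventually_ge_atTop (4 * j + 6)] with n hn
    simp [f, numFactors, show j < (n - 2) / 4 by omega]
  have hbound (n j : ℕ) : ‖f n j‖ ≤ (π / (4 * j + 3)) ^ 2 := by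
    simp only [f]
    split_ifs with hj
    · have hn := four_mul_add_six_le_of_lt_numFactors hj
      have hn₀ : n ≠ 0 := by rintro rfl; simp at hn; linarith
      have hθ := angle_pos hn₀
      have hπ := natCast_mul_angle hn₀
      rw [norm_neg, norm_pow, Real.norm_eq_abs, sq_abs]
      have hy : (4 * j + 3) * angle n ≤ π / 2 := by rw [← hπ]; gcongr; linarith
      refine pow_le_pow_left₀ (div_nonneg (sin_nonneg_of_nonneg_of_le_pi (by positivity) ?_)
        (sin_mul_angle_pos (by positivity) (by linarith)).le) ?_ 2
      · nlinarith
      · refine (sin_div_sin_le_mul_div (by positivity) (by positivity) hy).trans_eq ?_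
        field_simp
    · simp [sq_nonneg]
  simpa [htprod, ← sub_eq_add_neg] using tendsto_tprod_one_add_of_dominated_convergence
    (summable_div_four_mul_add_three_sq π) hlim (Eventually.of_forall hbound)

noncomputable def sinRatioProd (n : ℕ) : ℝ :=
  ∏ j ∈ range (numFactors n), sin ((4 * j + 5) * angle n) / sin ((4 * j + 3) * angle n)

theorem sinRatioProd_nonneg (n : ℕ) : 0 ≤ sinRatioProd n :=
  prod_nonneg fun j hj => by
    have hn := four_mul_add_six_le_of_lt_numFactors (mem_range.1 hj)
    exact div_nonneg (sin_mul_angle_pos (by positivity) (by linarith)).le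
      (sin_mul_angle_pos (by positivity) (by linarith)).le

theorem sq_sinRatioProd_div_natCast {n : ℕ} (hn : n ≠ 0) :
    sinRatioProd n ^ 2 / n = sin ((4 * numFactors n + 1) * angle n) / (n * sin (angle n)) *
      ∏ j ∈ range (numFactors n),
        (1 - (sin (2 * angle n) / sin ((4 * j + 3) * angle n)) ^ 2) := by
  have h₀ : sin (angle n) ≠ 0 := by
    simpa using (sin_mul_angle_pos (n := n) one_pos (by norm_cast; omega)).ne'
  have h₃ (j : ℕ) (hj : j < numFactors n) : sin ((4 * j + 3) * angle n) ≠ 0 :=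
    (sin_mul_angle_pos (by positivity)
      (by linarith [four_mul_add_six_le_of_lt_numFactors hj])).ne'
  rw [sinRatioProd, sq_prod_sin_div_sin _ _ h₀ h₃]
  ring

theorem tendsto_sinRatioProd_div_sqrt :
    Tendsto (fun n => sinRatioProd n / √n) atTop
      (𝓝 √(2 / π * ∏' j : ℕ, (1 - (2 / (4 * j + 3) : ℝ) ^ 2))) := by
  refine (tendsto_sin_div_natCast_mul_sin.mul tendsto_prod_one_sub_sin_div_sin_sq).sqrt.congr' ?_
  filter_upwards [eventually_ne_atTop 0] with n hn
  rw [← sq_sinRatioProd_div_natCast hn, sqrt_div (sq_nonneg _), sqrt_sq (sinRatioProd_nonneg n)]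

/-- The motivating example: for `θ = π/(2n)`, the product
`D n = ∏ sin((4j+5)θ) / sin((4j+3)θ)`, taken over those `j ≥ 0` for which the
argument `(4j+5)θ` stays below `π/2` (note any such `j` satisfies `j < n`),
satisfies `D n ∼ C * √n` for some constant `C > 0`; in particular `D n → ∞`. -/
theorem stmt_12 (D : ℕ → ℝ)
    (hD : ∀ n : ℕ, 4 ≤ n → D n =
      ∏ j ∈ (Finset.range n).filter
          (fun j : ℕ => ((4 * j + 5) : ℝ) * (π / (2 * n)) < π / 2),
        Real.sin ((4 * j + 5) * (π / (2 * n))) /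
          Real.sin ((4 * j + 3) * (π / (2 * n)))) :
    (∃ C : ℝ, 0 < C ∧
        Tendsto (fun n : ℕ => D n / Real.sqrt n) atTop (𝓝 C)) ∧
      Tendsto D atTop atTop := by
  have hD' : sinRatioProd =ᶠ[atTop] D := by
    filter_upwards [eventually_ge_atTop 4] with n hn
    rw [hD n hn, filter_range_eq_range_numFactors (by omega)]
    rfl
  have hC : 0 < 2 / π * ∏' j : ℕ, (1 - (2 / (4 * j + 3) : ℝ) ^ 2) := by
    refine mul_pos (by positivity) (tprod_one_sub_pos (summable_div_four_mul_add_three_sq 2)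
      fun j => ?_)
    rw [div_pow, div_lt_one (by positivity)]
    nlinarith [j.cast_nonneg (α := ℝ)]
  have hlim := tendsto_sinRatioProd_div_sqrt.congr' (hD'.mono fun n h => by rw [h])
  refine ⟨⟨_, sqrt_pos.2 hC, hlim⟩, ?_⟩
  refine ((tendsto_sqrt_atTop.comp tendsto_natCast_atTop_atTop).atTop_mul_pos
    (sqrt_pos.2 hC) hlim).congr' ?_
  filter_upwards [eventually_ne_atTop 0] with n hn
  exact mul_div_cancel₀ _ (sqrt_ne_zero'.2 (by positivity))
end

section
/- Let a, b, c, d be positive reals and k ≥ 2 an integer. Set ε = ((k−1)/k)^{1/k}, and for n ∈ ℕ let m(n) = ⌊nε/(cd) − max(a,b)/c⌋ and D_n = ∏_{j=0}^{m(n)} exp(−((cj+a)d/n)^k) / exp(−((cj+b)d/n)^k). Then lim_{n→∞} D_n = exp(−((k−1)/k)·(a−b)/c). -/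
open Filter Topology Finset Real

/-! Taking logarithms, `log D n = (d / n) ^ k * ∑_{j ≤ m n} ((c j + b) ^ k - (c j + a) ^ k)`.
Expanded binomially, the summand is a polynomial in `j` of degree `k - 1` with leading coefficient
`k c ^ (k - 1) (b - a)`. Comparison with `∫ x ^ i` gives `∑_{j ≤ m} j ^ i ≈ m ^ (i + 1) / (i + 1)`,
and `m n / n → ε / (c d)`, so only the leading term survives and `log D n` tends to
`(b - a) c ^ (k - 1) d ^ k (ε / (c d)) ^ k = (b - a) ε ^ k / c`. -/

lemma sum_range_pow_le (p N : ℕ) : ∑ j ∈ range N, (j : ℝ) ^ p ≤ (N : ℝ) ^ (p + 1) / (p + 1) := by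
  have hmono : MonotoneOn (fun x : ℝ => x ^ p) (Set.Icc 0 (0 + N)) :=
    pow_left_monotoneOn.mono fun _ hx => hx.1
  simpa [integral_pow] using hmono.sum_le_integral

lemma pow_succ_div_le_sum_range_pow (p N : ℕ) :
    (N : ℝ) ^ (p + 1) / (p + 1) ≤ ∑ j ∈ range (N + 1), (j : ℝ) ^ p := by
  have hmono : MonotoneOn (fun x : ℝ => x ^ p) (Set.Icc 0 (0 + N)) :=
    pow_left_monotoneOn.mono fun _ hx => hx.1
  have h := hmono.integral_le_sum
  simp only [integral_pow, zero_add, Nat.cast_add, Nat.cast_one, zero_pow p.succ_ne_zero,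
    sub_zero] at h
  rw [sum_range_succ']
  push_cast
  linarith [pow_nonneg (le_refl (0 : ℝ)) p]

lemma tendsto_natFloor_mul_sub_div {α : ℝ} (hα : 0 < α) (β : ℝ) :
    Tendsto (fun n : ℕ => (⌊n * α - β⌋₊ : ℝ) / n) atTop (𝓝 α) := by
  have hlim : ∀ γ : ℝ, Tendsto (fun n : ℕ => α - γ / n) atTop (𝓝 α) := fun γ => by
    simpa using tendsto_const_nhds.sub (tendsto_const_div_atTop_nhds_zero_nat γ)
  have hnonneg : ∀ᶠ n : ℕ in atTop, 0 ≤ n * α - β :=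
    (tendsto_atTop_add_const_right _ (-β)
      (tendsto_natCast_atTop_atTop.atTop_mul_const hα)).eventually_ge_atTop 0
  refine tendsto_of_tendsto_of_tendsto_of_le_of_le' (hlim (β + 1)) (hlim β) ?_ ?_
  · filter_upwards [eventually_gt_atTop 0] with n hn
    have hn : (0 : ℝ) < n := by exact_mod_cast hn
    rw [le_div_iff₀ hn, sub_mul, div_mul_cancel₀ _ hn.ne']
    linarith [Nat.lt_floor_add_one (n * α - β)]
  · filter_upwards [eventually_gt_atTop 0, hnonneg] with n hn hx
    have hn : (0 : ℝ) < n := by exact_mod_cast hn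
    rw [div_le_iff₀ hn, sub_mul, div_mul_cancel₀ _ hn.ne']
    linarith [Nat.floor_le hx]

lemma add_pow_sub_add_pow {R : Type*} [CommRing R] (x a b : R) (k : ℕ) :
    (x + b) ^ k - (x + a) ^ k =
      ∑ i ∈ range k, k.choose i * (b ^ (k - i) - a ^ (k - i)) * x ^ i := by
  rw [add_pow, add_pow, ← sum_sub_distrib, sum_range_succ, Nat.sub_self, pow_zero, pow_zero,
    sub_self, add_zero]
  exact sum_congr rfl fun i _ => by ring

section PowerSums

variable {m : ℕ → ℕ} {L : ℝ}

lemma tendsto_sum_range_pow_div (hm : Tendsto (fun n => (m n : ℝ) / n) atTop (𝓝 L)) (p : ℕ) :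
    Tendsto (fun n => (∑ j ∈ range (m n + 1), (j : ℝ) ^ p) / (n : ℝ) ^ (p + 1)) atTop
      (𝓝 (L ^ (p + 1) / (p + 1))) := by
  have hm' : Tendsto (fun n => ((m n : ℝ) + 1) / n) atTop (𝓝 L) := by
    simpa [add_div] using hm.add tendsto_one_div_atTop_nhds_zero_nat
  refine tendsto_of_tendsto_of_tendsto_of_le_of_le ((hm.pow (p + 1)).div_const _)
    ((hm'.pow (p + 1)).div_const _) (fun n => ?_) (fun n => ?_)
  · rw [div_pow, div_right_comm]
    exact div_le_div_of_nonneg_right (pow_succ_div_le_sum_range_pow p (m n)) (by positivity)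
  · rw [div_pow, div_right_comm]
    exact div_le_div_of_nonneg_right (by exact_mod_cast sum_range_pow_le p (m n + 1))
      (by positivity)

lemma tendsto_sum_range_pow_div_of_lt (hm : Tendsto (fun n => (m n : ℝ) / n) atTop (𝓝 L))
    {p k : ℕ} (hpk : p + 1 < k) :
    Tendsto (fun n => (∑ j ∈ range (m n + 1), (j : ℝ) ^ p) / (n : ℝ) ^ k) atTop (𝓝 0) := by
  obtain ⟨q, rfl⟩ : ∃ q, k = p + 1 + (q + 1) := ⟨k - (p + 2), by omega⟩
  have h := (tendsto_sum_range_pow_div hm p).mul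
    ((tendsto_one_div_atTop_nhds_zero_nat (𝕜 := ℝ)).pow (q + 1))
  rw [zero_pow q.succ_ne_zero, mul_zero] at h
  refine h.congr fun n => ?_
  rw [one_div_pow, ← div_eq_mul_one_div, div_div, ← pow_add]

lemma tendsto_sum_range_add_pow_sub_add_pow_div
    (hm : Tendsto (fun n => (m n : ℝ) / n) atTop (𝓝 L)) (a b c : ℝ) (k : ℕ) :
    Tendsto (fun n => (∑ j ∈ range (m n + 1), ((c * j + b) ^ (k + 1) - (c * j + a) ^ (k + 1))) /
      (n : ℝ) ^ (k + 1)) atTop (𝓝 ((b - a) * c ^ k * L ^ (k + 1))) := by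
  set coeff : ℕ → ℝ := fun i => (k + 1).choose i * (b ^ (k + 1 - i) - a ^ (k + 1 - i)) * c ^ i
  set S : ℕ → ℕ → ℝ := fun i n => (∑ j ∈ range (m n + 1), (j : ℝ) ^ i) / (n : ℝ) ^ (k + 1)
  have hexpand : ∀ n : ℕ, (∑ j ∈ range (m n + 1),
      ((c * j + b) ^ (k + 1) - (c * j + a) ^ (k + 1))) / (n : ℝ) ^ (k + 1) =
        ∑ i ∈ range (k + 1), coeff i * S i n := by
    intro n
    simp only [add_pow_sub_add_pow, mul_pow, coeff, S, mul_sum, sum_div]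
    rw [sum_comm]
    refine sum_congr rfl fun i _ => sum_congr rfl fun j _ => ?_
    ring
  have hlower : Tendsto (fun n => ∑ i ∈ range k, coeff i * S i n) atTop (𝓝 0) := by
    simpa using tendsto_finsetSum (range k) fun i hi =>
      (tendsto_sum_range_pow_div_of_lt hm (by simpa using hi)).const_mul (coeff i)
  have hlead := (tendsto_sum_range_pow_div hm k).const_mul (coeff k)
  have hlim : 0 + coeff k * (L ^ (k + 1) / (k + 1)) = (b - a) * c ^ k * L ^ (k + 1) := by
    simp only [coeff, zero_add, Nat.choose_succ_self_right, Nat.add_sub_cancel_left, pow_one]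
    push_cast
    field_simp
  refine (hlim ▸ hlower.add hlead).congr fun n => ?_
  rw [hexpand, sum_range_succ _ k]

end PowerSums

theorem stmt_13_general (a b c d : ℝ) (hc : 0 < c) (hd : 0 < d)
    (k : ℕ) (hk : 2 ≤ k)
    (ε : ℝ) (hε : ε = (((k : ℝ) - 1) / k) ^ ((1 : ℝ) / k))
    (m : ℕ → ℕ) (hm : ∀ n : ℕ, m n = (⌊(n : ℝ) * ε / (c * d) - max a b / c⌋).toNat)
    (D : ℕ → ℝ)
    (hD : ∀ n : ℕ, D n = ∏ j ∈ Finset.range (m n + 1),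
      Real.exp (-((c * j + a) * d / n) ^ k) / Real.exp (-((c * j + b) * d / n) ^ k)) :
    Tendsto D atTop (𝓝 (Real.exp (-(((k : ℝ) - 1) / k) * ((a - b) / c)))) := by
  obtain ⟨k, rfl⟩ : ∃ k', k = k' + 1 := ⟨k - 1, by omega⟩
  simp only [Nat.cast_add, Nat.cast_one, add_sub_cancel_right] at hε ⊢
  have hk0 : (0 : ℝ) < k := by exact_mod_cast (by omega : 0 < k)
  have hε_pow : ε ^ (k + 1) = k / (k + 1) := by
    rw [hε, ← rpow_natCast, ← rpow_mul (by positivity)]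
    push_cast
    rw [one_div_mul_cancel (by positivity), rpow_one]
  have hL : Tendsto (fun n => (m n : ℝ) / n) atTop (𝓝 (ε / (c * d))) := by
    simpa only [hm, Int.floor_toNat, mul_div_assoc] using
      tendsto_natFloor_mul_sub_div (α := ε / (c * d)) (hε ▸ by positivity) (max a b / c)
  have hD_exp : ∀ n, D n = exp (d ^ (k + 1) * ((∑ j ∈ range (m n + 1),
      ((c * j + b) ^ (k + 1) - (c * j + a) ^ (k + 1))) / (n : ℝ) ^ (k + 1))) := by
    intro n
    simp only [hD n, ← exp_sub, ← exp_sum, mul_sum, sum_div]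
    exact congrArg exp (sum_congr rfl fun j _ => by rw [div_pow, div_pow, mul_pow, mul_pow]; ring)
  have hlimit : d ^ (k + 1) * ((b - a) * c ^ k * (ε / (c * d)) ^ (k + 1)) =
      -(k / (k + 1)) * ((a - b) / c) := by
    rw [div_pow, hε_pow, mul_pow]
    field_simp
    ring
  rw [funext hD_exp, ← hlimit]
  exact ((tendsto_sum_range_add_pow_sub_add_pow_div hL a b c k).const_mul (d ^ (k + 1))).rexp

/-- **Exercise.** For `k ≥ 2`, with `ε = ((k-1)/k) ^ (1/k)`,
`m n = ⌊n*ε/(c*d) - max a b / c⌋` and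
`D n = ∏_{j=0}^{m n} exp(-((c*j+a)*d/n)^k) / exp(-((c*j+b)*d/n)^k)`, one has
`lim_{n→∞} D n = exp(-((k-1)/k) * (a-b)/c)`. -/
theorem stmt_13 (a b c d : ℝ) (ha : 0 < a) (hb : 0 < b) (hc : 0 < c) (hd : 0 < d)
    (k : ℕ) (hk : 2 ≤ k)
    (ε : ℝ) (hε : ε = (((k : ℝ) - 1) / k) ^ ((1 : ℝ) / k))
    (m : ℕ → ℕ) (hm : ∀ n : ℕ, m n = (⌊(n : ℝ) * ε / (c * d) - max a b / c⌋).toNat)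
    (D : ℕ → ℝ)
    (hD : ∀ n : ℕ, D n = ∏ j ∈ Finset.range (m n + 1),
      Real.exp (-((c * j + a) * d / n) ^ k) / Real.exp (-((c * j + b) * d / n) ^ k)) :
    Tendsto D atTop (𝓝 (Real.exp (-(((k : ℝ) - 1) / k) * ((a - b) / c)))) :=
  stmt_13_general a b c d hc hd k hk ε hε m hm D hD
end
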